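/- arXiv:2310.15056 — 4 statements merged into one kernel-verified Lean document; each statement's English description precedes it below -/
import Mathlib

section
/- Let W ∈ ℂ and let K ⊂ ℝ be a compact set. There exist constants C > 0 and M > 0 such that for all real τ ≥ M and all δ ∈ K with δ ≠ Im W, one has |√(W − τ − iδ) − sgn(Im W − δ)·(i·√τ + ((Im W − δ) − i·Re W)/(2√τ))| ≤ C·τ^(−3/2). -/
/-! Write `z = a - τ + i b` with `a = Re W`, `b = Im W - δ`, and let `T` be the claimed expansion.
Then `T² = z + (b - i a)² / (4τ)`, so `(√z - T)(√z + T) = -(b - i a)² / (4τ)` is `O(1/τ)`.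
Both `√z` and `T` have imaginary part of the sign of `b`, and `|Im T| ≥ √τ / 2` once `a ≤ τ`;
hence `|√z + T| ≥ √τ / 2` and `|√z - T| = O(τ^(-3/2))`, uniformly because `a` and `b` stay
bounded for `δ ∈ K`. -/

/-- The principal branch of the complex square root,
holomorphic on `ℂ ∖ (−∞,0]` and positive on `(0,+∞)`. -/
noncomputable def csqrt (z : ℂ) : ℂ := z ^ (1 / 2 : ℂ)

open Complex

lemma csqrt_mul_self (z : ℂ) : csqrt z * csqrt z = z := by
  simpa [csqrt, sq] using cpow_nat_inv_pow z two_ne_zero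

lemma csqrt_im_mul_sign_im_nonneg (z : ℂ) : 0 ≤ (csqrt z).im * Real.sign z.im := by
  rw [csqrt, one_div]
  rcases lt_trichotomy z.im 0 with h | h | h
  · rw [cpow_inv_two_im_eq_neg_sqrt h, Real.sign_of_neg h, neg_mul_neg, mul_one]
    exact Real.sqrt_nonneg _
  · simp [h]
  · rw [cpow_inv_two_im_eq_sqrt h.le, Real.sign_of_pos h, mul_one]
    exact Real.sqrt_nonneg _

lemma abs_im_le_norm_add_of_im_mul_im_nonneg {s t : ℂ} (h : 0 ≤ s.im * t.im) :
    |t.im| ≤ ‖s + t‖ :=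
  calc |t.im| ≤ |(s + t).im| := sq_le_sq.mp (by rw [add_im]; nlinarith)
    _ ≤ ‖s + t‖ := abs_im_le_norm _

lemma rpow_neg_three_halves {τ : ℝ} (hτ : 0 ≤ τ) : τ ^ ((-3 : ℝ) / 2) = (τ * √τ)⁻¹ := by
  rw [neg_div, Real.rpow_neg hτ, Real.rpow_div_two_eq_sqrt _ hτ, Real.rpow_ofNat, pow_succ, sq,
    Real.mul_self_sqrt hτ]

/-- The two-term expansion of `√(a - τ + i b)` as `τ → +∞`; the theorem takes `a = Re W`,
`b = Im W - δ`. -/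
noncomputable def sqrtExpansion (a b τ : ℝ) : ℂ :=
  Real.sign b * (I * √τ + ((b : ℂ) - I * a) / (2 * √τ))

lemma sqrtExpansion_mul_self {a b τ : ℝ} (hb : b ≠ 0) (hτ : 0 < τ) :
    sqrtExpansion a b τ * sqrtExpansion a b τ
      = a - τ + b * I + ((b : ℂ) - I * a) ^ 2 / (4 * τ) := by
  have hσ : ((Real.sign b : ℝ) : ℂ) ^ 2 = 1 := by
    rcases Real.sign_apply_eq_of_ne_zero b hb with h | h <;> simp [h]
  have hu : (√τ : ℂ) ≠ 0 := ofReal_ne_zero.mpr (Real.sqrt_pos.mpr hτ).ne'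
  have hτu : (τ : ℂ) = (√τ : ℂ) ^ 2 := by
    rw [← ofReal_pow, Real.sq_sqrt hτ.le]
  rw [sqrtExpansion, mul_mul_mul_comm, ← sq, hσ, one_mul, hτu]
  field_simp
  ring_nf
  rw [I_sq]
  ring

lemma sqrtExpansion_im (a b τ : ℝ) :
    (sqrtExpansion a b τ).im = Real.sign b * (√τ - a / (2 * √τ)) := by
  rw [sqrtExpansion, show 2 * (√τ : ℂ) = ((2 * √τ : ℝ) : ℂ) by push_cast; rfl]
  simp only [mul_im, ofReal_re, ofReal_im, add_im, div_ofReal_im, sub_im, I_re, I_im]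
  ring

lemma sqrt_div_two_le_sqrt_sub_div {a τ : ℝ} (hτ : 0 < τ) (haτ : a ≤ τ) :
    √τ / 2 ≤ √τ - a / (2 * √τ) := by
  have hu : 0 < √τ := Real.sqrt_pos.mpr hτ
  have hshift : a / (2 * √τ) ≤ √τ / 2 := by
    rw [div_le_div_iff₀ (by positivity) two_pos]
    nlinarith [Real.mul_self_sqrt hτ.le]
  linarith

lemma norm_ofReal_sub_I_mul_sq (a b : ℝ) : ‖(b : ℂ) - I * a‖ ^ 2 = a ^ 2 + b ^ 2 := by
  rw [Complex.sq_norm, normSq_apply]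
  simp only [sub_re, sub_im, mul_re, mul_im, ofReal_re, ofReal_im, I_re, I_im]
  ring

theorem norm_csqrt_sub_sqrtExpansion_le {a b τ : ℝ} (hb : b ≠ 0) (hτ : 0 < τ) (haτ : a ≤ τ) :
    ‖csqrt (a - τ + b * I) - sqrtExpansion a b τ‖ ≤ (a ^ 2 + b ^ 2) / 2 * τ ^ ((-3 : ℝ) / 2) := by
  set s := csqrt (a - τ + b * I)
  set T := sqrtExpansion a b τ
  have hp := sqrt_div_two_le_sqrt_sub_div hτ haτ
  have hu : 0 < √τ := Real.sqrt_pos.mpr hτ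
  have hsum : √τ / 2 ≤ ‖s + T‖ := by
    have hs := csqrt_im_mul_sign_im_nonneg (a - τ + b * I)
    rw [show (a - τ + b * I : ℂ).im = b by simp] at hs
    calc √τ / 2 ≤ |T.im| := by
          have hσ : |Real.sign b| = 1 := by
            rcases Real.sign_apply_eq_of_ne_zero b hb with h | h <;> simp [h]
          rwa [sqrtExpansion_im, abs_mul, hσ, one_mul, abs_of_nonneg (by linarith)]
      _ ≤ ‖s + T‖ := by
          refine abs_im_le_norm_add_of_im_mul_im_nonneg ?_
          rw [sqrtExpansion_im, ← mul_assoc]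
          exact mul_nonneg hs (by linarith)
  have hprod : ‖s - T‖ * ‖s + T‖ = (a ^ 2 + b ^ 2) / (4 * τ) := by
    rw [← norm_mul, show (s - T) * (s + T) = s * s - T * T by ring, csqrt_mul_self,
      sqrtExpansion_mul_self hb hτ, sub_add_cancel_left, norm_neg, norm_div, norm_pow,
      norm_ofReal_sub_I_mul_sq, norm_mul, RCLike.norm_ofNat, norm_real, Real.norm_of_nonneg hτ.le]
  calc ‖s - T‖ = (a ^ 2 + b ^ 2) / (4 * τ) / ‖s + T‖ := by
        rw [← hprod, mul_div_cancel_right₀ _ (by linarith : 0 < ‖s + T‖).ne']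
    _ ≤ (a ^ 2 + b ^ 2) / (4 * τ) / (√τ / 2) := by gcongr
    _ = (a ^ 2 + b ^ 2) / 2 * τ ^ ((-3 : ℝ) / 2) := by
        rw [rpow_neg_three_halves hτ.le]
        field_simp
        ring

/-- Asymptotic expansion of `√(W − τ − iδ)` as `τ → +∞`, uniformly for `δ` in a
compact set `K` with `δ ≠ Im W`. -/
theorem stmt1 (W : ℂ) (K : Set ℝ) (hK : IsCompact K) :
    ∃ C M : ℝ, 0 < C ∧ 0 < M ∧ ∀ τ : ℝ, M ≤ τ → ∀ δ ∈ K, δ ≠ W.im →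
      ‖csqrt (W - τ - Complex.I * δ)
          - ((Real.sign (W.im - δ) : ℝ) : ℂ) *
            (Complex.I * (Real.sqrt τ : ℂ)
              + (((W.im - δ : ℝ) : ℂ) - Complex.I * (W.re : ℂ)) / (2 * (Real.sqrt τ : ℂ)))‖
        ≤ C * τ ^ ((-3 : ℝ) / 2) := by
  obtain ⟨R, hR⟩ := hK.exists_bound_of_continuousOn (f := fun δ => W.im - δ) (by fun_prop)
  refine ⟨(W.re ^ 2 + R ^ 2) / 2 + 1, |W.re| + 1, by positivity, by positivity, ?_⟩
  intro τ hτ δ hδ hne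
  have hb : W.im - δ ≠ 0 := sub_ne_zero.mpr hne.symm
  have hbR : (W.im - δ) ^ 2 ≤ R ^ 2 := sq_le_sq' (abs_le.mp (hR δ hδ)).1 (abs_le.mp (hR δ hδ)).2
  have hz : W - τ - I * δ = W.re - τ + (W.im - δ : ℝ) * I := by apply Complex.ext <;> simp
  rw [hz]
  calc _ ≤ (W.re ^ 2 + (W.im - δ) ^ 2) / 2 * τ ^ ((-3 : ℝ) / 2) :=
        norm_csqrt_sub_sqrtExpansion_le hb (by linarith [abs_nonneg W.re])
          (by linarith [le_abs_self W.re])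
    _ ≤ ((W.re ^ 2 + R ^ 2) / 2 + 1) * τ ^ ((-3 : ℝ) / 2) :=
        mul_le_mul_of_nonneg_right (by linarith) (Real.rpow_nonneg (by linarith [abs_nonneg W.re]) _)
end

section
/- Let W ∈ ℂ and let K ⊂ ℝ be a compact set. There exist constants C > 0 and M > 0 such that for all real τ ≥ M and all δ ∈ K with δ ≠ Im W, one has |Re √(W − τ − iδ) − |Im W − δ|/(2√τ)| ≤ C·|Im W − δ|·τ^(−3/2). In particular Re √(W − τ − iδ) = (|Im W − δ|/(2√τ))·(1 + O(1/τ)) uniformly for δ ∈ K ∖ {Im W}. -/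
open Real

lemma csqrt_re_eq_abs_im_div {z : ℂ} (hz : z.re < ‖z‖) :
    (csqrt z).re = |z.im| / √(2 * (‖z‖ - z.re)) := by
  have hnorm : ‖z‖ ^ 2 = z.re ^ 2 + z.im ^ 2 := by
    rw [Complex.sq_norm, Complex.normSq_apply]; ring
  have hhalf : (‖z‖ + z.re) / 2 = z.im ^ 2 / (2 * (‖z‖ - z.re)) := by
    rw [div_eq_div_iff two_ne_zero (by linarith)]
    linear_combination 2 * hnorm
  rw [csqrt, one_div, ← Complex.ofReal_ofNat, ← Complex.ofReal_inv, Complex.ofReal_inv,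
    Complex.ofReal_ofNat, Complex.cpow_inv_two_re, hhalf, sqrt_div (sq_nonneg _), sqrt_sq_eq_abs]

lemma norm_add_re_le_abs_im {z : ℂ} (hz : z.re ≤ 0) : ‖z‖ + z.re ≤ |z.im| := by
  linarith [Complex.norm_le_abs_re_add_abs_im z, abs_of_nonpos hz]

lemma abs_inv_sqrt_sub_inv_sqrt_le {m a c : ℝ} (hm : 0 < m) (ha : m ≤ a) (hc : m ≤ c) :
    |1 / √a - 1 / √c| ≤ |a - c| / (2 * m * √m) := by
  have hsm : 0 < √m := sqrt_pos.mpr hm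
  have hsa : 0 < √a := hsm.trans_le (sqrt_le_sqrt ha)
  have hsc : 0 < √c := hsm.trans_le (sqrt_le_sqrt hc)
  have hdiff : 1 / √a - 1 / √c = (c - a) / (√a * √c * (√a + √c)) := by
    field_simp
    linear_combination sq_sqrt (hm.le.trans hc) - sq_sqrt (hm.le.trans ha)
  have hden : 2 * m * √m ≤ √a * √c * (√a + √c) := calc
    2 * m * √m = √m * √m * (√m + √m) := by rw [mul_self_sqrt hm.le]; ring
    _ ≤ √a * √c * (√a + √c) := by gcongr
  rw [hdiff, abs_div, abs_sub_comm, abs_of_pos (hden.trans_lt' (by positivity))]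
  exact div_le_div_of_nonneg_left (abs_nonneg _) (by positivity) hden

lemma abs_csqrt_re_sub_le {z : ℂ} {τ : ℝ} (hτ : 0 < τ) (hz : z.re ≤ -τ / 2) :
    |(csqrt z).re - |z.im| / (2 * √τ)|
      ≤ |z.im| * |2 * (‖z‖ - z.re) - 4 * τ| / (2 * τ * √τ) := by
  have hre : -z.re ≤ ‖z‖ := (neg_le_abs z.re).trans (Complex.abs_re_le_norm z)
  have hsqrt4 : 2 * √τ = √(4 * τ) := by
    rw [sqrt_mul (by norm_num), show (4 : ℝ) = 2 ^ 2 by norm_num, sqrt_sq two_pos.le]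
  have hlip := abs_inv_sqrt_sub_inv_sqrt_le (a := 2 * (‖z‖ - z.re)) (c := 4 * τ) hτ
    (by linarith) (by linarith)
  rw [csqrt_re_eq_abs_im_div (by linarith), hsqrt4, div_eq_mul_one_div |z.im|,
    div_eq_mul_one_div |z.im|, ← mul_sub, abs_mul, abs_abs, mul_div_assoc]
  exact mul_le_mul_of_nonneg_left hlip (abs_nonneg _)

lemma abs_two_mul_norm_sub_re_sub_le {z : ℂ} (hz : z.re ≤ 0) (τ : ℝ) :
    |2 * (‖z‖ - z.re) - 4 * τ| ≤ 2 * |z.im| + 4 * |z.re + τ| := by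
  have hnonneg : 0 ≤ ‖z‖ + z.re := by linarith [neg_abs_le z.re, Complex.abs_re_le_norm z]
  have hupper := norm_add_re_le_abs_im hz
  rw [show 2 * (‖z‖ - z.re) - 4 * τ = 2 * (‖z‖ + z.re) - 4 * (z.re + τ) by ring]
  rw [abs_le]
  constructor <;> linarith [le_abs_self (z.re + τ), neg_abs_le (z.re + τ)]

lemma rpow_neg_three_div_two {τ : ℝ} (hτ : 0 < τ) : τ ^ ((-3 : ℝ) / 2) = 1 / (τ * √τ) := by
  rw [show (-3 : ℝ) / 2 = -(1 + 1 / 2) by norm_num, rpow_neg hτ.le, rpow_add hτ, rpow_one,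
    ← sqrt_eq_rpow, one_div]

/-- Asymptotic expansion of `Re √(W − τ − iδ)` as `τ → +∞`, uniformly for `δ` in a
compact set `K` with `δ ≠ Im W`:
`Re √(W − τ − iδ) = (|Im W − δ|/(2√τ))·(1 + O(1/τ))`. -/
theorem stmt2 (W : ℂ) (K : Set ℝ) (hK : IsCompact K) :
    ∃ C M : ℝ, 0 < C ∧ 0 < M ∧ ∀ τ : ℝ, M ≤ τ → ∀ δ ∈ K, δ ≠ W.im →
      |(csqrt (W - τ - Complex.I * δ)).re - |W.im - δ| / (2 * Real.sqrt τ)|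
        ≤ C * |W.im - δ| * τ ^ ((-3 : ℝ) / 2) := by
  obtain ⟨B, hB⟩ : ∃ B, ∀ δ ∈ K, ‖W.im - δ‖ ≤ B :=
    hK.exists_bound_of_continuousOn (by fun_prop)
  refine ⟨|B| + 2 * |W.re| + 1, 2 * |W.re| + 1, by positivity, by positivity, ?_⟩
  intro τ hτ δ hδ _
  have hτ0 : 0 < τ := by linarith [abs_nonneg W.re]
  set z : ℂ := W - τ - Complex.I * δ
  have hzre : z.re + τ = W.re := by simp [z]
  have hzim : |z.im| ≤ |B| := by simpa [z] using (hB δ hδ).trans (le_abs_self B)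
  have hzre_le : z.re ≤ -τ / 2 := by linarith [le_abs_self W.re]
  have hgap := abs_two_mul_norm_sub_re_sub_le (hzre_le.trans (by linarith)) τ
  rw [hzre] at hgap
  rw [show W.im - δ = z.im by simp [z], rpow_neg_three_div_two hτ0]
  calc |(csqrt z).re - |z.im| / (2 * √τ)|
      ≤ |z.im| * |2 * (‖z‖ - z.re) - 4 * τ| / (2 * τ * √τ) := abs_csqrt_re_sub_le hτ0 hzre_le
    _ ≤ |z.im| * (2 * |B| + 4 * |W.re|) / (2 * τ * √τ) := by gcongr; linarith
    _ = (|B| + 2 * |W.re|) * |z.im| * (1 / (τ * √τ)) := by field_simp; ring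
    _ ≤ (|B| + 2 * |W.re| + 1) * |z.im| * (1 / (τ * √τ)) := by gcongr ?_ * _ * _; linarith
end

section
/- Let V₊, V₋ ∈ ℂ with Im V₊ ≠ Im V₋. There exist constants C > 0 and M > 0 such that for all real τ ≥ M and all δ strictly between Im V₊ and Im V₋, writing z = τ + iδ: (i) ||k₊(z) + k₋(z)| − |V₊ − V₋|/(2√τ)| ≤ C·τ^(−3/2); (ii) ||k₊(z) − k₋(z)| − 2√τ| ≤ C·τ^(−1/2); (iii) ||k₊(z)| − √τ| ≤ C·τ^(−1/2) and ||k₋(z)| − √τ| ≤ C·τ^(−1/2). -/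
open Complex

lemma csqrt_sq (w : ℂ) : csqrt w ^ 2 = w := by
  simp [csqrt, one_div]

lemma norm_csqrt (w : ℂ) : ‖csqrt w‖ = √‖w‖ := by
  rw [← csqrt_sq w, norm_pow, Real.sqrt_sq (norm_nonneg _), csqrt_sq]

lemma re_csqrt_nonneg (w : ℂ) : 0 ≤ (csqrt w).re := by
  rcases eq_or_ne w 0 with rfl | hw
  · simp [csqrt]
  rw [csqrt, cpow_def_of_ne_zero hw, exp_re]
  refine mul_nonneg (Real.exp_nonneg _) (Real.cos_nonneg_of_mem_Icc ?_)
  have := neg_pi_lt_arg w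
  have := arg_le_pi w
  constructor <;> simp [log_im] <;> linarith

lemma two_mul_re_mul_im_csqrt (w : ℂ) : 2 * (csqrt w).re * (csqrt w).im = w.im := by
  conv_rhs => rw [← csqrt_sq w]
  simp only [sq, mul_im]; ring

lemma im_csqrt_sq (w : ℂ) : (csqrt w).im ^ 2 = (‖w‖ - w.re) / 2 := by
  have hre : (csqrt w).re ^ 2 - (csqrt w).im ^ 2 = w.re := by
    conv_rhs => rw [← csqrt_sq w]
    simp only [sq, mul_re]
  have hnorm : (csqrt w).re ^ 2 + (csqrt w).im ^ 2 = ‖w‖ := by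
    rw [← Real.sq_sqrt (norm_nonneg w), ← norm_csqrt, ← normSq_eq_norm_sq, normSq_apply]; ring
  linarith

lemma im_csqrt_mul_im_csqrt_neg {w w' : ℂ} (h : w.im * w'.im < 0) :
    (csqrt w).im * (csqrt w').im < 0 := by
  rw [← two_mul_re_mul_im_csqrt w, ← two_mul_re_mul_im_csqrt w'] at h
  have := mul_nonneg (re_csqrt_nonneg w) (re_csqrt_nonneg w')
  nlinarith

lemma abs_sqrt_sub_sqrt_le {x t : ℝ} (hx : 0 ≤ x) (ht : 0 < t) :
    |√x - √t| ≤ |x - t| / √t := by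
  rw [le_div_iff₀ (Real.sqrt_pos.2 ht)]
  calc |√x - √t| * √t ≤ |√x - √t| * (√x + √t) := by
        gcongr; exact le_add_of_nonneg_left (Real.sqrt_nonneg x)
    _ = |x - t| := by
      rw [← abs_of_pos (by positivity : 0 < √x + √t), ← abs_mul]
      congr 1; nlinarith [Real.sq_sqrt hx, Real.sq_sqrt ht.le]

lemma abs_add_abs_le_abs_sub {x y : ℝ} (h : x * y ≤ 0) : |x| + |y| ≤ |x - y| := by
  cases abs_cases x <;> cases abs_cases y <;> cases abs_cases (x - y) <;> nlinarith

lemma Real.rpow_neg_natCast_div_two {x : ℝ} (hx : 0 ≤ x) (n : ℕ) :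
    x ^ (-(n : ℝ) / 2) = (√x ^ n)⁻¹ := by
  rw [neg_div, Real.rpow_neg hx, Real.sqrt_eq_rpow, ← Real.rpow_natCast, ← Real.rpow_mul hx]
  ring_nf

section

variable {w : ℂ} {t B : ℝ}

lemma abs_norm_sub_le_of_norm_add_le (hw : ‖w + t‖ ≤ B) (ht : 0 ≤ t) : |‖w‖ - t| ≤ B := by
  simpa [abs_of_nonneg ht] using (abs_norm_sub_norm_le w (-t)).trans (by simpa using hw)

lemma abs_norm_csqrt_sub_sqrt_le (hw : ‖w + t‖ ≤ B) (ht : 0 < t) :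
    |‖csqrt w‖ - √t| ≤ B / √t := by
  rw [norm_csqrt]
  exact (abs_sqrt_sub_sqrt_le (norm_nonneg w) ht).trans
    (by gcongr; exact abs_norm_sub_le_of_norm_add_le hw ht.le)

lemma sub_le_im_csqrt_sq (hw : ‖w + t‖ ≤ B) : t - B ≤ (csqrt w).im ^ 2 := by
  have hnorm : t - B ≤ ‖w‖ := by
    have := norm_sub_norm_le (t : ℂ) (-w)
    simp only [norm_real, Real.norm_eq_abs, norm_neg, sub_neg_eq_add, add_comm (t : ℂ)] at this
    linarith [le_abs_self t]
  have hre : w.re + t ≤ B := by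
    simpa using (le_abs_self _).trans ((abs_re_le_norm (w + t)).trans hw)
  rw [im_csqrt_sq]
  linarith

lemma sqrt_sub_div_sqrt_le_abs_im_csqrt (hw : ‖w + t‖ ≤ B) (ht : 0 < t) (hBt : B ≤ t) :
    √t - B / √t ≤ |(csqrt w).im| := by
  have hB : 0 ≤ B := (norm_nonneg _).trans hw
  have hsq : (√t - B / √t) ^ 2 = t - B - B * (t - B) / t := by
    field_simp
    rw [Real.sq_sqrt ht.le]
    ring
  refine (le_abs_self _).trans (sq_le_sq.1 ?_)
  rw [hsq]
  have : 0 ≤ B * (t - B) / t := by have := sub_nonneg.2 hBt; positivity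
  linarith [sub_le_im_csqrt_sq hw]

end

section

variable {a b : ℂ} {s e : ℝ}

lemma abs_norm_sub_sub_two_mul_le (ha : |‖a‖ - s| ≤ e) (hb : |‖b‖ - s| ≤ e)
    (hia : s - e ≤ |a.im|) (hib : s - e ≤ |b.im|) (hab : a.im * b.im ≤ 0) :
    |‖a - b‖ - 2 * s| ≤ 2 * e := by
  have hupper : ‖a - b‖ ≤ ‖a‖ + ‖b‖ := norm_sub_le a b
  have hlower : |a.im| + |b.im| ≤ ‖a - b‖ :=
    (abs_add_abs_le_abs_sub hab).trans (by simpa using abs_im_le_norm (a - b))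
  rw [abs_le] at ha hb ⊢
  constructor <;> linarith

lemma abs_norm_add_sub_le (hs : 0 < s) (he : 2 * e ≤ s) (hq : |‖a - b‖ - 2 * s| ≤ 2 * e) :
    |‖a + b‖ - ‖a ^ 2 - b ^ 2‖ / (2 * s)| ≤ ‖a ^ 2 - b ^ 2‖ * e / s ^ 2 := by
  set q := ‖a - b‖
  have hqs : s ≤ q := by linarith [(abs_le.1 hq).1]
  have hq0 : 0 < q := hs.trans_le hqs
  have he0 : 0 ≤ e := by linarith [abs_nonneg (q - 2 * s)]
  have hsum : ‖a + b‖ = ‖a ^ 2 - b ^ 2‖ / q := by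
    rw [eq_div_iff hq0.ne', ← norm_mul]; ring_nf
  have hdiff : ‖a + b‖ - ‖a ^ 2 - b ^ 2‖ / (2 * s)
      = ‖a ^ 2 - b ^ 2‖ * (2 * s - q) / (q * (2 * s)) := by
    rw [hsum]; field_simp
  rw [hdiff, abs_div, abs_mul, abs_norm, abs_of_pos (by positivity : 0 < q * (2 * s)),
    abs_sub_comm]
  calc ‖a ^ 2 - b ^ 2‖ * |q - 2 * s| / (q * (2 * s))
      ≤ ‖a ^ 2 - b ^ 2‖ * (2 * e) / (s * (2 * s)) := by gcongr
    _ = ‖a ^ 2 - b ^ 2‖ * e / s ^ 2 := by field_simp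

end

lemma csqrt_pair_estimates {w w' : ℂ} {t B : ℝ} (hw : ‖w + t‖ ≤ B) (hw' : ‖w' + t‖ ≤ B)
    (him : w.im * w'.im < 0) (ht : 0 < t) (hBt : 2 * B ≤ t) :
    |‖csqrt w + csqrt w'‖ - ‖w - w'‖ / (2 * √t)| ≤ ‖w - w'‖ * B / √t ^ 3 ∧
    |‖csqrt w - csqrt w'‖ - 2 * √t| ≤ 2 * B / √t ∧
    |‖csqrt w‖ - √t| ≤ B / √t ∧ |‖csqrt w'‖ - √t| ≤ B / √t := by
  have hst : 0 < √t := Real.sqrt_pos.2 ht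
  have hnorm := abs_norm_csqrt_sub_sqrt_le hw ht
  have hnorm' := abs_norm_csqrt_sub_sqrt_le hw' ht
  have hdiff := abs_norm_sub_sub_two_mul_le hnorm hnorm'
    (sqrt_sub_div_sqrt_le_abs_im_csqrt hw ht (by linarith))
    (sqrt_sub_div_sqrt_le_abs_im_csqrt hw' ht (by linarith)) (im_csqrt_mul_im_csqrt_neg him).le
  have hsmall : 2 * (B / √t) ≤ √t := by
    rw [mul_div_assoc', div_le_iff₀ hst, ← sq, Real.sq_sqrt ht.le]; exact hBt
  refine ⟨?_, by rwa [mul_div_assoc], hnorm, hnorm'⟩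
  have hsum := abs_norm_add_sub_le hst hsmall hdiff
  rw [csqrt_sq, csqrt_sq] at hsum
  convert hsum using 1
  field_simp

lemma sub_mul_sub_neg_of_min_lt_of_lt_max {x y δ : ℝ} (h₁ : min x y < δ) (h₂ : δ < max x y) :
    (x - δ) * (y - δ) < 0 := by
  rcases min_lt_iff.1 h₁ with h | h <;> rcases lt_max_iff.1 h₂ with h' | h' <;> nlinarith

lemma abs_le_abs_add_abs_of_min_lt_of_lt_max {x y δ : ℝ} (h₁ : min x y < δ)
    (h₂ : δ < max x y) : |δ| ≤ |x| + |y| := by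
  rw [abs_le]
  rcases min_lt_iff.1 h₁ with h | h <;> rcases lt_max_iff.1 h₂ with h' | h' <;>
    constructor <;> linarith [neg_abs_le x, le_abs_self x, neg_abs_le y, le_abs_self y]

theorem stmt3_general (Vp Vm : ℂ) :
    ∃ C M : ℝ, 0 < C ∧ 0 < M ∧ ∀ τ δ : ℝ, M ≤ τ →
      min Vp.im Vm.im < δ → δ < max Vp.im Vm.im →
      |‖csqrt (Vp - ((τ : ℂ) + Complex.I * δ)) + csqrt (Vm - ((τ : ℂ) + Complex.I * δ))‖
          - ‖Vp - Vm‖ / (2 * Real.sqrt τ)| ≤ C * τ ^ ((-3 : ℝ) / 2) ∧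
      |‖csqrt (Vp - ((τ : ℂ) + Complex.I * δ)) - csqrt (Vm - ((τ : ℂ) + Complex.I * δ))‖
          - 2 * Real.sqrt τ| ≤ C * τ ^ ((-1 : ℝ) / 2) ∧
      |‖csqrt (Vp - ((τ : ℂ) + Complex.I * δ))‖ - Real.sqrt τ|
          ≤ C * τ ^ ((-1 : ℝ) / 2) ∧
      |‖csqrt (Vm - ((τ : ℂ) + Complex.I * δ))‖ - Real.sqrt τ|
          ≤ C * τ ^ ((-1 : ℝ) / 2) := by
  obtain ⟨B, hB, hBp, hBm⟩ : ∃ B : ℝ, 0 < B ∧ ‖Vp‖ + (|Vp.im| + |Vm.im|) ≤ B ∧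
      ‖Vm‖ + (|Vp.im| + |Vm.im|) ≤ B :=
    ⟨‖Vp‖ + ‖Vm‖ + |Vp.im| + |Vm.im| + 1, by positivity, by linarith [norm_nonneg Vm],
      by linarith [norm_nonneg Vp]⟩
  refine ⟨(‖Vp - Vm‖ + 2) * B, 2 * B, by positivity, by positivity, ?_⟩
  intro τ δ hτ h₁ h₂
  have hτ0 : 0 < τ := by linarith
  have hδ := abs_le_abs_add_abs_of_min_lt_of_lt_max h₁ h₂
  have hshift (V : ℂ) : ‖V - ((τ : ℂ) + I * δ) + τ‖ ≤ ‖V‖ + |δ| := by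
    rw [show V - ((τ : ℂ) + I * δ) + τ = V - I * δ by ring]
    simpa using norm_sub_le V (I * δ)
  obtain ⟨hsum, hdiff, hp, hm⟩ := csqrt_pair_estimates
    ((hshift Vp).trans (by linarith)) ((hshift Vm).trans (by linarith))
    (by simpa using sub_mul_sub_neg_of_min_lt_of_lt_max h₁ h₂) hτ0 hτ
  rw [sub_sub_sub_cancel_right] at hsum
  have hrpow₁ : τ ^ ((-1 : ℝ) / 2) = (√τ ^ 1)⁻¹ := by
    exact_mod_cast Real.rpow_neg_natCast_div_two hτ0.le 1
  have hrpow₃ : τ ^ ((-3 : ℝ) / 2) = (√τ ^ 3)⁻¹ := by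
    exact_mod_cast Real.rpow_neg_natCast_div_two hτ0.le 3
  rw [hrpow₁, hrpow₃, pow_one, ← div_eq_mul_inv, ← div_eq_mul_inv]
  have hv := norm_nonneg (Vp - Vm)
  refine ⟨hsum.trans ?_, hdiff.trans ?_, hp.trans ?_, hm.trans ?_⟩ <;> gcongr <;> nlinarith

/-- Asymptotics, as `τ → +∞` and uniformly for `δ` strictly between `Im V₊` and `Im V₋`,
of `|k₊(z) + k₋(z)|`, `|k₊(z) − k₋(z)|`, `|k₊(z)|` and `|k₋(z)|`, where `z = τ + iδ`,
`k₊(z) = √(V₊ − z)` and `k₋(z) = √(V₋ − z)`. -/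
theorem stmt3 (Vp Vm : ℂ) (h : Vp.im ≠ Vm.im) :
    ∃ C M : ℝ, 0 < C ∧ 0 < M ∧ ∀ τ δ : ℝ, M ≤ τ →
      min Vp.im Vm.im < δ → δ < max Vp.im Vm.im →
      |‖csqrt (Vp - ((τ : ℂ) + Complex.I * δ)) + csqrt (Vm - ((τ : ℂ) + Complex.I * δ))‖
          - ‖Vp - Vm‖ / (2 * Real.sqrt τ)| ≤ C * τ ^ ((-3 : ℝ) / 2) ∧
      |‖csqrt (Vp - ((τ : ℂ) + Complex.I * δ)) - csqrt (Vm - ((τ : ℂ) + Complex.I * δ))‖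
          - 2 * Real.sqrt τ| ≤ C * τ ^ ((-1 : ℝ) / 2) ∧
      |‖csqrt (Vp - ((τ : ℂ) + Complex.I * δ))‖ - Real.sqrt τ|
          ≤ C * τ ^ ((-1 : ℝ) / 2) ∧
      |‖csqrt (Vm - ((τ : ℂ) + Complex.I * δ))‖ - Real.sqrt τ|
          ≤ C * τ ^ ((-1 : ℝ) / 2) :=
  stmt3_general Vp Vm
end

section
/- Let V₊, V₋ ∈ ℂ and α ∈ ℂ, and set C_{V,α} := min(Re V₊, Re V₋) − max(|Im V₊|, |Im V₋|) − (|Re α| + |Im α|)². For every continuously differentiable, compactly supported u : ℝ → ℂ with ∫_ℝ |u(x)|² dx = 1, the complex number q := ∫_ℝ |u'(x)|² dx + V₊·∫_0^∞ |u(x)|² dx + V₋·∫_{−∞}^0 |u(x)|² dx + α·|u(0)|² satisfies |Im q| ≤ Re q − C_{V,α}. (Consequently the numerical range of the complex point interaction operator 𝓛_α = −d²/dx² + V + α·δ₀ is contained in the sector with vertex C_{V,α} and half-angle π/4.) -/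
/-!
Since `Im q` is at most `max |Im V±| + |Im α| |u 0|²` in absolute value and
`Re q ≥ ∫ |u'|² + min Re V± + Re α |u 0|²`, everything reduces to the trace inequality
`a |u 0|² ≤ ∫ |u'|² + a²` for `a = |Re α| + |Im α|`. That is the fundamental theorem of calculus
for `|u|²` on `(0, ∞)`, whose derivative `2 ⟪u, u'⟫` satisfies `-2a ⟪u, u'⟫ ≤ |u'|² + a² |u|²`
pointwise because `|u' + a u|² ≥ 0`.
-/

open MeasureTheory Set Filter
open scoped RealInnerProductSpace

lemma neg_mul_two_mul_inner_le {E : Type*} [NormedAddCommGroup E] [InnerProductSpace ℝ E]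
    (a : ℝ) (x y : E) : -(a * (2 * ⟪x, y⟫)) ≤ ‖y‖ ^ 2 + a ^ 2 * ‖x‖ ^ 2 := by
  have h := norm_add_sq_real y (a • x)
  rw [inner_smul_right, real_inner_comm, norm_smul, mul_pow, Real.norm_eq_abs, sq_abs] at h
  nlinarith [sq_nonneg ‖y + a • x‖]

lemma Continuous.integrable_norm_sq_of_hasCompactSupport {X E : Type*} [TopologicalSpace X]
    [MeasurableSpace X] [OpensMeasurableSpace X] {μ : Measure X} [IsFiniteMeasureOnCompacts μ]
    [NormedAddCommGroup E] {f : X → E} (hf : Continuous f) (hsupp : HasCompactSupport f) :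
    Integrable (fun x => ‖f x‖ ^ 2) μ := by
  have hsq : HasCompactSupport fun x => ‖f x‖ ^ 2 :=
    hsupp.comp_left (g := fun z : E => ‖z‖ ^ 2) (by simp)
  exact (hf.norm.pow 2).integrable_of_hasCompactSupport hsq

lemma Continuous.integrable_inner_of_hasCompactSupport_left {X E : Type*} [TopologicalSpace X]
    [MeasurableSpace X] [OpensMeasurableSpace X] {μ : Measure X} [IsFiniteMeasureOnCompacts μ]
    [NormedAddCommGroup E] [InnerProductSpace ℝ E] {f g : X → E} (hf : Continuous f)
    (hg : Continuous g) (hsupp : HasCompactSupport f) : Integrable (fun x => ⟪f x, g x⟫) μ := by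
  have hsupp_inner : HasCompactSupport fun x => ⟪f x, g x⟫ :=
    hsupp.mono fun x hx hfx => hx (by simp [hfx])
  exact (hf.inner hg).integrable_of_hasCompactSupport hsupp_inner

section HalfLine

variable {E : Type*} [NormedAddCommGroup E] [InnerProductSpace ℝ E] {u u' : ℝ → E}

lemma HasCompactSupport.integral_Ioi_two_mul_inner_eq (hderiv : ∀ x, HasDerivAt u (u' x) x)
    (hcont : Continuous u') (hsupp : HasCompactSupport u) (b : ℝ) :
    ∫ x in Ioi b, 2 * ⟪u x, u' x⟫ = -‖u b‖ ^ 2 := by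
  have hu : Continuous u := continuous_iff_continuousAt.2 fun x => (hderiv x).continuousAt
  have hint : Integrable fun x => 2 * ⟪u x, u' x⟫ :=
    (hu.integrable_inner_of_hasCompactSupport_left hcont hsupp).const_mul 2
  have hlim : Tendsto (‖u ·‖ ^ 2) atTop (nhds 0) := by
    have hsq : HasCompactSupport (‖u ·‖ ^ 2) := hsupp.comp_left (g := (‖·‖ ^ 2)) (by simp)
    rw [hasCompactSupport_iff_eventuallyEq, coclosedCompact_eq_cocompact] at hsq
    exact (hsq.filter_mono atTop_le_cocompact).tendsto
  rw [integral_Ioi_of_hasDerivAt_of_tendsto' (fun x _ => (hderiv x).norm_sq) hint.integrableOn hlim,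
    zero_sub]

theorem mul_norm_sq_le_integral_Ioi (hderiv : ∀ x, HasDerivAt u (u' x) x)
    (hcont : Continuous u') (hsupp : HasCompactSupport u) (a b : ℝ) :
    a * ‖u b‖ ^ 2 ≤ (∫ x in Ioi b, ‖u' x‖ ^ 2) + a ^ 2 * ∫ x in Ioi b, ‖u x‖ ^ 2 := by
  have hu : Continuous u := continuous_iff_continuousAt.2 fun x => (hderiv x).continuousAt
  have hsupp' : HasCompactSupport u' := funext (fun x => (hderiv x).deriv) ▸ hsupp.deriv
  have hint := hu.integrable_norm_sq_of_hasCompactSupport (μ := volume) hsupp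
  have hint' := hcont.integrable_norm_sq_of_hasCompactSupport (μ := volume) hsupp'
  calc a * ‖u b‖ ^ 2 = ∫ x in Ioi b, -(a * (2 * ⟪u x, u' x⟫)) := by
        rw [integral_neg, integral_const_mul,
          hsupp.integral_Ioi_two_mul_inner_eq hderiv hcont b]
        ring
    _ ≤ ∫ x in Ioi b, (‖u' x‖ ^ 2 + a ^ 2 * ‖u x‖ ^ 2) := by
        refine setIntegral_mono ?_ (hint'.add (hint.const_mul _)).integrableOn
          fun x => neg_mul_two_mul_inner_le a (u x) (u' x)
        exact (((hu.integrable_inner_of_hasCompactSupport_left hcont hsupp).const_mul 2).const_mul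
          a).neg.integrableOn
    _ = _ := by
        rw [integral_add hint'.integrableOn (hint.const_mul _).integrableOn, integral_const_mul]

end HalfLine

lemma abs_im_le_re_sub_of_mul_le (Vp Vm α : ℂ) {D P M s : ℝ} (hP : 0 ≤ P) (hM : 0 ≤ M)
    (hs : 0 ≤ s) (hPM : P + M = 1) (htrace : (|α.re| + |α.im|) * s ≤ D + (|α.re| + |α.im|) ^ 2) :
    |(D + Vp * P + Vm * M + α * s : ℂ).im| ≤ (D + Vp * P + Vm * M + α * s : ℂ).re
      - (min Vp.re Vm.re - max |Vp.im| |Vm.im| - (|α.re| + |α.im|) ^ 2) := by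
  simp only [Complex.add_re, Complex.add_im, Complex.mul_re, Complex.mul_im, Complex.ofReal_re,
    Complex.ofReal_im, mul_zero, sub_zero, zero_add]
  have him : |Vp.im * P + Vm.im * M + α.im * s| ≤ |Vp.im| * P + |Vm.im| * M + |α.im| * s := by
    calc _ ≤ |Vp.im * P| + |Vm.im * M| + |α.im * s| := abs_add_three _ _ _
      _ = _ := by rw [abs_mul, abs_mul, abs_mul, abs_of_nonneg hP, abs_of_nonneg hM, abs_of_nonneg hs]
  obtain rfl : M = 1 - P := by linarith
  linarith [mul_le_mul_of_nonneg_right (min_le_left Vp.re Vm.re) hP,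
    mul_le_mul_of_nonneg_right (min_le_right Vp.re Vm.re) hM,
    mul_le_mul_of_nonneg_right (le_max_left |Vp.im| |Vm.im|) hP,
    mul_le_mul_of_nonneg_right (le_max_right |Vp.im| |Vm.im|) hM,
    mul_le_mul_of_nonneg_right (neg_abs_le α.re) hs]

/-- The numerical range of the complex point interaction operator
`𝓛_α = −d²/dx² + V + α·δ₀` is contained in the sector with vertex
`C_{V,α} = min(Re V₊, Re V₋) − max(|Im V₊|, |Im V₋|) − (|Re α| + |Im α|)²`
and half-angle `π/4`: for every normalized `C¹` compactly supported `u`, the value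
`q = ∫|u'|² + V₊∫_{x>0}|u|² + V₋∫_{x<0}|u|² + α|u(0)|²` satisfies
`|Im q| ≤ Re q − C_{V,α}`. -/
theorem stmt19 (Vp Vm α : ℂ) (u u' : ℝ → ℂ)
    (hderiv : ∀ x : ℝ, HasDerivAt u (u' x) x)
    (hcont : Continuous u')
    (hsupp : HasCompactSupport u)
    (hnorm : (∫ x : ℝ, ‖u x‖ ^ 2) = 1) :
    ∀ q : ℂ,
      q = ((∫ x : ℝ, ‖u' x‖ ^ 2 : ℝ) : ℂ)
          + Vp * ((∫ x in Set.Ioi (0 : ℝ), ‖u x‖ ^ 2 : ℝ) : ℂ)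
          + Vm * ((∫ x in Set.Iio (0 : ℝ), ‖u x‖ ^ 2 : ℝ) : ℂ)
          + α * ((‖u 0‖ ^ 2 : ℝ) : ℂ) →
      |q.im| ≤ q.re - (min Vp.re Vm.re - max |Vp.im| |Vm.im| - (|α.re| + |α.im|) ^ 2) := by
  rintro q rfl
  have hu : Continuous u := continuous_iff_continuousAt.2 fun x => (hderiv x).continuousAt
  have hsupp' : HasCompactSupport u' := funext (fun x => (hderiv x).deriv) ▸ hsupp.deriv
  have hint := hu.integrable_norm_sq_of_hasCompactSupport (μ := volume) hsupp
  have hint' := hcont.integrable_norm_sq_of_hasCompactSupport (μ := volume) hsupp'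
  have hsplit : (∫ x in Ioi 0, ‖u x‖ ^ 2) + ∫ x in Iio 0, ‖u x‖ ^ 2 = 1 := by
    rw [← hnorm, ← integral_Iic_eq_integral_Iio, add_comm,
      intervalIntegral.integral_Iic_add_Ioi hint.integrableOn hint.integrableOn]
  have htrace : (|α.re| + |α.im|) * ‖u 0‖ ^ 2 ≤ (∫ x, ‖u' x‖ ^ 2) + (|α.re| + |α.im|) ^ 2 := by
    refine (mul_norm_sq_le_integral_Ioi hderiv hcont hsupp _ 0).trans ?_
    have hpos : 0 ≤ᵐ[volume] fun x => ‖u x‖ ^ 2 := .of_forall fun x => by positivity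
    have hpos' : 0 ≤ᵐ[volume] fun x => ‖u' x‖ ^ 2 := .of_forall fun x => by positivity
    exact add_le_add (setIntegral_le_integral hint' hpos') (mul_le_of_le_one_right (by positivity)
      ((setIntegral_le_integral hint hpos).trans hnorm.le))
  exact abs_im_le_re_sub_of_mul_le Vp Vm α (integral_nonneg fun _ => by positivity)
    (integral_nonneg fun _ => by positivity) (by positivity) hsplit htrace
end
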